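/- arXiv:2112.11448 — 5 statements merged into one kernel-verified Lean document; each statement's English description precedes it below -/
import Mathlib

section
/- Under the moving-mesh advection update with μ + μ̄ ≥ 1 (and μ ∈ (0,1), μ̄ ∈ [0,1)), the total mass is conserved up to fluxes: Σ_{j=0}^{N} φ'_j = Σ_{j=0}^{N} φ_j + φ_in − φ_out, where φ_out = μ' φ_{N−1} + φ_N and μ' = μ + μ̄ − 1. -/
/-!
The wrap update shifts the interior cells by one. The influx is split between the new cells `0`
and `1` with weights `μ'/μ` and `1 - μ'/μ`, which sum to one, and the old cell
`N - 1` is split between the new cell `N` and the outflux; the old cell `N` leaves entirely.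
-/

open Finset

variable {M : Type*} [AddCommMonoid M] {N : ℕ}

theorem sum_range_succ_eq_ends_add_sum_Ico (hN : 2 ≤ N) (f : ℕ → M) :
    ∑ j ∈ range (N + 1), f j = f 0 + ∑ j ∈ Ico 1 (N - 1), f j + f (N - 1) + f N := by
  obtain ⟨K, rfl⟩ : ∃ K, N = K + 2 := ⟨N - 2, by omega⟩
  rw [sum_range_succ, sum_range_succ, sum_range_eq_add_Ico _ (by omega)]
  rfl

theorem sum_range_succ_eq_of_shift (hN : 2 ≤ N) {f g : ℕ → M}
    (hg : ∀ j, 2 ≤ j → j ≤ N - 1 → g j = f (j - 1)) :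
    ∑ j ∈ range (N + 1), g j = g 0 + g 1 + ∑ j ∈ Ico 1 (N - 1), f j + g N := by
  obtain ⟨K, rfl⟩ : ∃ K, N = K + 2 := ⟨N - 2, by omega⟩
  have interior : ∑ i ∈ range K, g (i + 2) = ∑ j ∈ Ico 1 (K + 1), f j := by
    rw [sum_Ico_eq_sum_range, Nat.add_sub_cancel]
    refine sum_congr rfl fun i hi => ?_
    rw [hg (i + 2) (by omega) (by have := mem_range.mp hi; omega), add_comm 1 i]
    rfl
  rw [show K + 2 - 1 = K + 1 from rfl, sum_range_succ, sum_range_succ',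
    sum_range_succ' (fun i => g (i + 1)), interior]
  abel

theorem moving_mesh_mass_balance_wrap_general
    (N : ℕ) (hN : 2 ≤ N) (μ μ' φin φout : ℝ) (φ φ' : ℕ → ℝ)
    (hout : φout = μ' * φ (N - 1) + φ N)
    (h0 : φ' 0 = (μ' / μ) * φin)
    (h1 : φ' 1 = φ 0 + (1 - μ' / μ) * φin)
    (hmid : ∀ j, 2 ≤ j → j ≤ N - 1 → φ' j = φ (j - 1))
    (hend : φ' N = (1 - μ') * φ (N - 1)) :
    ∑ j ∈ Finset.range (N + 1), φ' j =
      (∑ j ∈ Finset.range (N + 1), φ j) + φin - φout := by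
  rw [sum_range_succ_eq_of_shift hN hmid, sum_range_succ_eq_ends_add_sum_Ico hN φ,
    h0, h1, hend, hout]
  ring

/-- Mass conservation up to fluxes for the moving-mesh advection update in the
wrap case `μ + μ̄ ≥ 1` (with `μ ∈ (0,1)`, `μ̄ ∈ [0,1)`):
`Σ_{j=0}^{N} φ'_j = Σ_{j=0}^{N} φ_j + φ_in − φ_out` with
`φ_out = μ' φ_{N−1} + φ_N` and `μ' = μ + μ̄ − 1`. -/
theorem moving_mesh_mass_balance_wrap
    (N : ℕ) (hN : 2 ≤ N) (μ μbar μ' φin φout : ℝ) (φ φ' : ℕ → ℝ)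
    (hμ0 : 0 < μ) (hμ1 : μ < 1) (hμbar : μbar ∈ Set.Ico (0:ℝ) 1)
    (hge : 1 ≤ μ + μbar)
    (hμ' : μ' = μ + μbar - 1)
    (hout : φout = μ' * φ (N - 1) + φ N)
    (h0 : φ' 0 = (μ' / μ) * φin)
    (h1 : φ' 1 = φ 0 + (1 - μ' / μ) * φin)
    (hmid : ∀ j, 2 ≤ j → j ≤ N - 1 → φ' j = φ (j - 1))
    (hend : φ' N = (1 - μ') * φ (N - 1)) :
    ∑ j ∈ Finset.range (N + 1), φ' j =
      (∑ j ∈ Finset.range (N + 1), φ j) + φin - φout :=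
  moving_mesh_mass_balance_wrap_general N hN μ μ' φin φout φ φ' hout h0 h1 hmid hend
end

section
/- The moving-mesh advection update with zero influx is exact for piecewise-constant data: fix N ≥ 2, Δa = 1/N, μ ∈ [0,1), μ̄ ∈ [0,1) (with μ > 0 if μ + μ̄ ≥ 1), and φ ∈ ℝ^{N+1}. Let φ̃ : ℝ → ℝ be the function that is constant on each mesh cell C_{μ,j} with ∫_{C_{μ,j}} φ̃ = φ_j (for every cell of positive length) and φ̃ = 0 outside [0,1], and let ψ(a) = φ̃(a − μ̄ Δa) be its exact translate. Then the update with φ_in = 0 satisfies φ'_j = ∫_{C_{μ',j}} ψ(a) da for every j = 0,…,N, and φ_out = ∫_{1}^{∞} ψ(a) da. -/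
/-- Lower endpoint of mesh cell `C_{μ,j}` (cell width `Δa = 1/N`, reference
points `a_j = j/N`): `C_{μ,0} = [0, μΔa]`, `C_{μ,j} = [(j−1+μ)Δa, (j+μ)Δa]`
for `1 ≤ j ≤ N−1`, `C_{μ,N} = [(N−1+μ)Δa, 1]`. -/
noncomputable def cellLo (N : ℕ) (μ : ℝ) (j : ℕ) : ℝ :=
  if j = 0 then 0 else ((j : ℝ) - 1 + μ) / N

/-- Upper endpoint of mesh cell `C_{μ,j}`. -/
noncomputable def cellHi (N : ℕ) (μ : ℝ) (j : ℕ) : ℝ :=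
  if j = N then 1 else ((j : ℝ) + μ) / N

/-!
Translating by `μbar / N` carries the mesh `C_μ` onto `C_{μ + μbar}`, and `C_{μ + μbar - 1}` is
`C_{μ + μbar}` with every interior index raised by one. So every interior cell of the updated mesh
is exactly the translate of an old cell and carries its mass. The translate `ψ` vanishes left of
`μbar / N` and right of `1 + μbar / N`; the remaining boundary cells and the outflow region
`[1, ∞)` are made of whole translated cells, stretches where `ψ` vanishes, and parts of translated
cells, on which `ψ` is constant and so carries the proportional share of the cell's mass.
-/

open MeasureTheory Set intervalIntegral

section IntervalIntegrals

variable {f : ℝ → ℝ} {c x y : ℝ}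

theorem intervalIntegrable_of_eqOn_Ioo (h : ∀ a ∈ Ioo x y, f a = c) (hxy : x ≤ y) :
    IntervalIntegrable f volume x y :=
  (intervalIntegrable_iff_integrableOn_Ioo_of_le hxy).2 <|
    (integrableOn_congr_fun h measurableSet_Ioo).2 (integrableOn_const measure_Ioo_lt_top.ne)

theorem integral_of_eqOn_Ioo (h : ∀ a ∈ Ioo x y, f a = c) (hxy : x ≤ y) :
    ∫ a in x..y, f a = c * (y - x) := by
  rw [integral_of_le hxy, integral_Ioc_eq_integral_Ioo, setIntegral_congr_fun measurableSet_Ioo h,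
    setIntegral_const, Real.volume_real_Ioo_of_le hxy, smul_eq_mul, mul_comm]

theorem setIntegral_Ioi_eq_integral (h : ∀ a, y < a → f a = 0) (hxy : x ≤ y) :
    ∫ a in Ioi x, f a = ∫ a in x..y, f a := by
  rw [integral_of_le hxy, setIntegral_eq_of_subset_of_forall_sdiff_eq_zero measurableSet_Ioi
    Ioc_subset_Ioi_self]
  rintro a ⟨hxa, hay⟩
  exact h a (lt_of_not_ge fun hle => hay ⟨hxa, hle⟩)

end IntervalIntegrals

section Cells

variable {N j : ℕ} {μ μbar : ℝ}

@[simp] theorem cellLo_zero : cellLo N μ 0 = 0 := if_pos rfl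

theorem cellLo_of_ne_zero (hj : j ≠ 0) : cellLo N μ j = ((j : ℝ) - 1 + μ) / N := if_neg hj

@[simp] theorem cellHi_self : cellHi N μ N = 1 := if_pos rfl

theorem cellHi_of_ne (hj : j ≠ N) : cellHi N μ j = ((j : ℝ) + μ) / N := if_neg hj

theorem cellLo_le_cellHi (hμ : μ ∈ Icc (0 : ℝ) 1) : cellLo N μ j ≤ cellHi N μ j := by
  unfold cellLo cellHi
  split_ifs with h0 hN hN
  · exact zero_le_one
  · exact div_nonneg (by simpa [h0] using hμ.1) N.cast_nonneg
  · exact div_le_one_of_le₀ (by rw [hN]; linarith [hμ.2]) N.cast_nonneg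
  · exact div_le_div_of_nonneg_right (by linarith) N.cast_nonneg

theorem cellLo_add_div (hj : j ≠ 0) : cellLo N μ j + μbar / N = cellLo N (μ + μbar) j := by
  simp only [cellLo_of_ne_zero hj]; ring

theorem cellHi_add_div (hj : j ≠ N) : cellHi N μ j + μbar / N = cellHi N (μ + μbar) j := by
  simp only [cellHi_of_ne hj]; ring

theorem cellLo_succ_sub_one (hj : j ≠ 0) : cellLo N (μ - 1) (j + 1) = cellLo N μ j := by
  rw [cellLo_of_ne_zero j.succ_ne_zero, cellLo_of_ne_zero hj]; push_cast; ring

theorem cellHi_succ_sub_one (hj : j + 1 < N) : cellHi N (μ - 1) (j + 1) = cellHi N μ j := by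
  rw [cellHi_of_ne hj.ne, cellHi_of_ne (by omega)]; push_cast; ring

end Cells

/-- `f` is a piecewise-constant reconstruction of the cell masses `φ` on the mesh `C_μ`
translated by `d`. -/
structure IsCellReconstruction (N : ℕ) (μ d : ℝ) (φ : ℕ → ℝ) (f : ℝ → ℝ) : Prop where
  const : ∀ j ≤ N, ∃ c, ∀ a ∈ Ioo (cellLo N μ j + d) (cellHi N μ j + d), f a = c
  integral : ∀ j ≤ N, ∫ a in (cellLo N μ j + d)..(cellHi N μ j + d), f a = φ j
  eq_zero : ∀ a ∉ Icc d (1 + d), f a = 0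

namespace IsCellReconstruction

variable {N j : ℕ} {μ μbar d : ℝ} {φ : ℕ → ℝ} {f : ℝ → ℝ}

theorem comp_sub (hconst : ∀ j ≤ N, ∃ c, ∀ a ∈ Ioo (cellLo N μ j) (cellHi N μ j), f a = c)
    (hint : ∀ j ≤ N, ∫ a in (cellLo N μ j)..(cellHi N μ j), f a = φ j)
    (hzero : ∀ a ∉ Icc (0 : ℝ) 1, f a = 0) (d : ℝ) :
    IsCellReconstruction N μ d φ (fun a => f (a - d)) where
  const j hj := by
    obtain ⟨c, hc⟩ := hconst j hj
    exact ⟨c, fun a ha => hc _ ⟨by linarith [ha.1], by linarith [ha.2]⟩⟩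
  integral j hj := by simpa only [integral_comp_sub_right, add_sub_cancel_right] using hint j hj
  eq_zero a ha := hzero _ fun h => ha ⟨by linarith [h.1], by linarith [h.2]⟩

theorem eq_zero_of_lt (h : IsCellReconstruction N μ d φ f) {a : ℝ} (ha : a < d) : f a = 0 :=
  h.eq_zero a fun h => ha.not_ge h.1

theorem eq_zero_of_gt (h : IsCellReconstruction N μ d φ f) {a : ℝ} (ha : 1 + d < a) : f a = 0 :=
  h.eq_zero a fun h => ha.not_ge h.2

theorem intervalIntegrable (h : IsCellReconstruction N μ d φ f) (hμ : μ ∈ Icc (0 : ℝ) 1)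
    (hj : j ≤ N) : IntervalIntegrable f volume (cellLo N μ j + d) (cellHi N μ j + d) :=
  have ⟨_, hc⟩ := h.const j hj
  intervalIntegrable_of_eqOn_Ioo hc (add_le_add_left (cellLo_le_cellHi hμ) d)

theorem integral_eq_zero_of_le (h : IsCellReconstruction N μ d φ f) {x y : ℝ} (hxy : x ≤ y)
    (hy : y ≤ d) : ∫ a in x..y, f a = 0 := by
  rw [integral_of_eqOn_Ioo (c := 0) (fun a ha => h.eq_zero_of_lt (ha.2.trans_le hy)) hxy, zero_mul]

theorem exists_eqOn_mul (h : IsCellReconstruction N μ d φ f) (hμ : μ ∈ Icc (0 : ℝ) 1)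
    (hj : j ≤ N) : ∃ c, (∀ a ∈ Ioo (cellLo N μ j + d) (cellHi N μ j + d), f a = c) ∧
      φ j = c * (cellHi N μ j - cellLo N μ j) := by
  obtain ⟨c, hc⟩ := h.const j hj
  refine ⟨c, hc, ?_⟩
  rw [← h.integral j hj, integral_of_eqOn_Ioo hc (add_le_add_left (cellLo_le_cellHi hμ) d)]
  ring

theorem integral_cell_zero_of_le (h : IsCellReconstruction N μ d φ f) (hμ : μ ∈ Icc (0 : ℝ) 1)
    {x : ℝ} (hx : x ≤ d) : ∫ a in x..(cellHi N μ 0 + d), f a = φ 0 := by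
  have hcell := h.intervalIntegrable hμ (Nat.zero_le N)
  rw [cellLo_zero, zero_add] at hcell
  have hzero : ∀ a ∈ Ioo x d, f a = 0 := fun a ha => h.eq_zero_of_lt ha.2
  rw [← integral_add_adjacent_intervals (intervalIntegrable_of_eqOn_Ioo hzero hx) hcell,
    integral_of_eqOn_Ioo hzero hx, zero_mul, zero_add, ← h.integral 0 (Nat.zero_le N), cellLo_zero,
    zero_add]

theorem setIntegral_Ioi_one (h : IsCellReconstruction N μ d φ f) (hd : 0 ≤ d) :
    ∫ a in Ioi 1, f a = ∫ a in 1..(1 + d), f a :=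
  setIntegral_Ioi_eq_integral (fun _ ha => h.eq_zero_of_gt ha) (by linarith)

theorem integral_cell_add_of_ne (h : IsCellReconstruction N μ (μbar / N) φ f) (hj : j ≤ N)
    (hj0 : j ≠ 0) (hjN : j ≠ N) :
    ∫ a in (cellLo N (μ + μbar) j)..(cellHi N (μ + μbar) j), f a = φ j := by
  rw [← cellLo_add_div hj0, ← cellHi_add_div hjN, h.integral j hj]

theorem integral_cell_add_zero (h : IsCellReconstruction N μ (μbar / N) φ f) (hN : N ≠ 0)
    (hμ : μ ∈ Icc (0 : ℝ) 1) (hμbar : 0 ≤ μbar) :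
    ∫ a in (cellLo N (μ + μbar) 0)..(cellHi N (μ + μbar) 0), f a = φ 0 := by
  rw [cellLo_zero, ← cellHi_add_div hN.symm]
  exact h.integral_cell_zero_of_le hμ (by positivity)

theorem integral_cell_add_self_add_setIntegral_Ioi (h : IsCellReconstruction N μ (μbar / N) φ f)
    (hN : N ≠ 0) (hμ : μ ∈ Icc (0 : ℝ) 1) (hμbar : 0 ≤ μbar) (hle : μ + μbar ≤ 1) :
    (∫ a in (cellLo N (μ + μbar) N)..(cellHi N (μ + μbar) N), f a) + ∫ a in Ioi 1, f a = φ N := by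
  obtain ⟨c, hc⟩ := h.const N le_rfl
  rw [cellLo_add_div hN, cellHi_self] at hc
  have hlo : cellLo N (μ + μbar) N ≤ 1 := by
    simpa using cellLo_le_cellHi (N := N) (j := N) ⟨by linarith [hμ.1], hle⟩
  have hd : 0 ≤ μbar / N := by positivity
  have hd' : 1 ≤ 1 + μbar / N := le_add_of_nonneg_right hd
  rw [h.setIntegral_Ioi_one hd, cellHi_self,
    integral_add_adjacent_intervals
      (intervalIntegrable_of_eqOn_Ioo (fun a ha => hc a (Ioo_subset_Ioo_right hd' ha)) hlo)
      (intervalIntegrable_of_eqOn_Ioo (fun a ha => hc a (Ioo_subset_Ioo_left hlo ha)) hd'),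
    ← cellLo_add_div hN, ← h.integral N le_rfl, cellHi_self]

theorem setIntegral_Ioi_one_of_add_le_one (h : IsCellReconstruction N μ (μbar / N) φ f) (hN : N ≠ 0)
    (hμ : μ ∈ Ico (0 : ℝ) 1) (hμbar : 0 ≤ μbar) (hle : μ + μbar ≤ 1) :
    ∫ a in Ioi 1, f a = μbar / (1 - μ) * φ N := by
  obtain ⟨c, hc, hφ⟩ := h.exists_eqOn_mul (Ico_subset_Icc_self hμ) le_rfl
  rw [cellHi_self] at hc hφ
  have hlo : cellLo N μ N + μbar / N ≤ 1 := by
    simpa [cellLo_add_div hN] using cellLo_le_cellHi (N := N) (j := N) ⟨by linarith [hμ.1], hle⟩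
  have hμ1 : 1 - μ ≠ 0 := by linarith [hμ.2]
  rw [h.setIntegral_Ioi_one (by positivity),
    integral_of_eqOn_Ioo (fun a ha => hc a (Ioo_subset_Ioo_left hlo ha))
      (le_add_of_nonneg_right (by positivity)), hφ, cellLo_of_ne_zero hN]
  field_simp
  ring

theorem integral_cell_sub_one_zero (h : IsCellReconstruction N μ (μbar / N) φ f) (hN : N ≠ 0)
    (hμ : μ ≤ 1) (hge : 1 ≤ μ + μbar) :
    ∫ a in (cellLo N (μ + μbar - 1) 0)..(cellHi N (μ + μbar - 1) 0), f a = 0 := by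
  rw [cellLo_zero, cellHi_of_ne hN.symm, Nat.cast_zero, zero_add]
  exact h.integral_eq_zero_of_le (by have := sub_nonneg.2 hge; positivity)
    (div_le_div_of_nonneg_right (by linarith) N.cast_nonneg)

theorem integral_cell_sub_one_one (h : IsCellReconstruction N μ (μbar / N) φ f) (hN : 1 < N)
    (hμ : μ ∈ Icc (0 : ℝ) 1) :
    ∫ a in (cellLo N (μ + μbar - 1) 1)..(cellHi N (μ + μbar - 1) 1), f a = φ 0 := by
  have hHi := cellHi_succ_sub_one (N := N) (μ := μ + μbar) (j := 0) hN
  rw [zero_add, ← cellHi_add_div (by omega)] at hHi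
  rw [hHi, cellLo_of_ne_zero one_ne_zero, Nat.cast_one, sub_self, zero_add]
  exact h.integral_cell_zero_of_le hμ
    (div_le_div_of_nonneg_right (by linarith [hμ.2]) N.cast_nonneg)

theorem integral_cell_sub_one_succ (h : IsCellReconstruction N μ (μbar / N) φ f) (hj0 : j ≠ 0)
    (hjN : j + 1 < N) :
    ∫ a in (cellLo N (μ + μbar - 1) (j + 1))..(cellHi N (μ + μbar - 1) (j + 1)), f a = φ j := by
  rw [cellLo_succ_sub_one hj0, cellHi_succ_sub_one hjN]
  exact h.integral_cell_add_of_ne (by omega) hj0 (by omega)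

/-- When the shift wraps around, the translate of cell `N - 1` is
`[cellLo N ν N, 1 + ν / N]` with `ν = μ + μbar - 1`. -/
theorem exists_eqOn_pred (h : IsCellReconstruction N μ (μbar / N) φ f) (hN : 1 < N)
    (hμ : μ ∈ Icc (0 : ℝ) 1) :
    ∃ c, (∀ a ∈ Ioo (cellLo N (μ + μbar - 1) N) (1 + (μ + μbar - 1) / N), f a = c) ∧
      φ (N - 1) = c / N := by
  obtain ⟨c, hc, hφ⟩ := h.exists_eqOn_mul hμ (N.sub_le 1)
  have hN' : (N : ℝ) ≠ 0 := by positivity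
  have hcast : ((N - 1 : ℕ) : ℝ) = N - 1 := by rw [Nat.cast_sub hN.le, Nat.cast_one]
  rw [cellLo_of_ne_zero (by omega), cellHi_of_ne (by omega), hcast] at hc hφ
  refine ⟨c, fun a ha => hc a ?_, ?_⟩
  · rw [cellLo_of_ne_zero (by omega)] at ha
    convert ha using 2 <;> field_simp <;> ring
  · rw [hφ]
    field_simp
    ring

theorem integral_cell_sub_one_self (h : IsCellReconstruction N μ (μbar / N) φ f) (hN : 1 < N)
    (hμ : μ ∈ Icc (0 : ℝ) 1) (hge : 1 ≤ μ + μbar) (hle : μ + μbar ≤ 2) :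
    ∫ a in (cellLo N (μ + μbar - 1) N)..(cellHi N (μ + μbar - 1) N), f a =
      (1 - (μ + μbar - 1)) * φ (N - 1) := by
  obtain ⟨c, hc, hφ⟩ := h.exists_eqOn_pred hN hμ
  have hlo : cellLo N (μ + μbar - 1) N ≤ 1 := by
    simpa using cellLo_le_cellHi (N := N) (j := N) ⟨by linarith, by linarith⟩
  have hhi : 1 ≤ 1 + (μ + μbar - 1) / N :=
    le_add_of_nonneg_right (div_nonneg (sub_nonneg.2 hge) N.cast_nonneg)
  rw [cellHi_self, integral_of_eqOn_Ioo (fun a ha => hc a (Ioo_subset_Ioo_right hhi ha)) hlo, hφ,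
    cellLo_of_ne_zero (by omega)]
  field_simp
  ring

theorem setIntegral_Ioi_one_of_one_le_add (h : IsCellReconstruction N μ (μbar / N) φ f) (hN : 1 < N)
    (hμ : μ ∈ Icc (0 : ℝ) 1) (hμbar : 0 ≤ μbar) (hge : 1 ≤ μ + μbar) (hle : μ + μbar ≤ 2) :
    ∫ a in Ioi 1, f a = (μ + μbar - 1) * φ (N - 1) + φ N := by
  obtain ⟨c, hc, hφ⟩ := h.exists_eqOn_pred hN hμ
  have hlo : cellLo N (μ + μbar - 1) N ≤ 1 := by
    simpa using cellLo_le_cellHi (N := N) (j := N) ⟨by linarith, by linarith⟩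
  have hhi : 1 ≤ 1 + (μ + μbar - 1) / N :=
    le_add_of_nonneg_right (div_nonneg (sub_nonneg.2 hge) N.cast_nonneg)
  have hc' : ∀ a ∈ Ioo 1 (1 + (μ + μbar - 1) / N), f a = c :=
    fun a ha => hc a (Ioo_subset_Ioo_left hlo ha)
  have hmid : cellLo N μ N + μbar / N = 1 + (μ + μbar - 1) / N := by
    rw [cellLo_of_ne_zero (by omega)]
    field_simp
    ring
  have hlast := h.intervalIntegrable hμ le_rfl
  have hlast_eq := h.integral N le_rfl
  rw [hmid, cellHi_self] at hlast hlast_eq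
  rw [h.setIntegral_Ioi_one (by positivity),
    ← integral_add_adjacent_intervals (intervalIntegrable_of_eqOn_Ioo hc' hhi) hlast,
    integral_of_eqOn_Ioo hc' hhi, hlast_eq, hφ]
  field_simp
  ring

theorem integral_cell_add_of_add_le_one (h : IsCellReconstruction N μ (μbar / N) φ f) (hN : N ≠ 0)
    (hμ : μ ∈ Ico (0 : ℝ) 1) (hμbar : 0 ≤ μbar) (hle : μ + μbar ≤ 1) (hj : j ≤ N) :
    ∫ a in (cellLo N (μ + μbar) j)..(cellHi N (μ + μbar) j), f a =
      if j = N then φ N - μbar / (1 - μ) * φ N else φ j := by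
  split_ifs with hjN
  · subst hjN
    rw [← h.setIntegral_Ioi_one_of_add_le_one hN hμ hμbar hle,
      ← h.integral_cell_add_self_add_setIntegral_Ioi hN (Ico_subset_Icc_self hμ) hμbar hle,
      add_sub_cancel_right]
  · obtain rfl | hj0 := eq_or_ne j 0
    · exact h.integral_cell_add_zero hN (Ico_subset_Icc_self hμ) hμbar
    · exact h.integral_cell_add_of_ne hj hj0 hjN

theorem integral_cell_sub_one_of_one_le_add (h : IsCellReconstruction N μ (μbar / N) φ f)
    (hN : 1 < N) (hμ : μ ∈ Icc (0 : ℝ) 1) (hge : 1 ≤ μ + μbar) (hle : μ + μbar ≤ 2) (hj : j ≤ N) :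
    ∫ a in (cellLo N (μ + μbar - 1) j)..(cellHi N (μ + μbar - 1) j), f a =
      if j = 0 then 0 else if j = N then (1 - (μ + μbar - 1)) * φ (N - 1) else φ (j - 1) := by
  split_ifs with hj0 hjN
  · subst hj0
    exact h.integral_cell_sub_one_zero (by omega) hμ.2 hge
  · subst hjN
    exact h.integral_cell_sub_one_self hN hμ hge hle
  · obtain ⟨k, rfl⟩ := Nat.exists_eq_succ_of_ne_zero hj0
    obtain rfl | hk0 := eq_or_ne k 0
    · exact h.integral_cell_sub_one_one hN hμ
    · exact h.integral_cell_sub_one_succ hk0 (by omega)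

end IsCellReconstruction

theorem moving_mesh_update_exact_general
    (N : ℕ) (hN : 2 ≤ N) (μ μbar μ' φout : ℝ) (φ φ' : ℕ → ℝ)
    (φtil ψ : ℝ → ℝ)
    (hμ : μ ∈ Set.Ico (0:ℝ) 1) (hμbar : μbar ∈ Set.Ico (0:ℝ) 1)
    (hμ' : μ' = if μ + μbar < 1 then μ + μbar else μ + μbar - 1)
    (hout : φout = if μ + μbar < 1 then (μbar / (1 - μ)) * φ N
      else (μ + μbar - 1) * φ (N - 1) + φ N)
    (hupd : ∀ j ≤ N, φ' j =
      if μ + μbar < 1 then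
        (if j = 0 then φ 0 + 0 else if j = N then φ N - φout else φ j)
      else
        (if j = 0 then (μ' / μ) * 0
         else if j = 1 then φ 0 + (1 - μ' / μ) * 0
         else if j = N then (1 - μ') * φ (N - 1)
         else φ (j - 1)))
    (hconst : ∀ j ≤ N, ∃ c : ℝ,
      ∀ a ∈ Set.Ioo (cellLo N μ j) (cellHi N μ j), φtil a = c)
    (hint : ∀ j ≤ N, ∫ a in (cellLo N μ j)..(cellHi N μ j), φtil a = φ j)
    (hzero : ∀ a : ℝ, a ∉ Set.Icc (0:ℝ) 1 → φtil a = 0)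
    (hψ : ∀ a : ℝ, ψ a = φtil (a - μbar / N)) :
    (∀ j ≤ N, φ' j = ∫ a in (cellLo N μ' j)..(cellHi N μ' j), ψ a) ∧
      φout = ∫ a in Set.Ioi (1:ℝ), ψ a := by
  have hrec : IsCellReconstruction N μ (μbar / N) φ ψ := by
    simpa only [← funext hψ] using IsCellReconstruction.comp_sub hconst hint hzero (μbar / N)
  by_cases hlt : μ + μbar < 1
  · simp only [hlt, if_true, add_zero] at hμ' hout hupd
    subst hμ' hout
    refine ⟨fun j hj => ?_,
      (hrec.setIntegral_Ioi_one_of_add_le_one (by omega) hμ hμbar.1 hlt.le).symm⟩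
    rw [hupd j hj, hrec.integral_cell_add_of_add_le_one (by omega) hμ hμbar.1 hlt.le hj]
    split_ifs <;> simp_all
  · have hge : 1 ≤ μ + μbar := not_lt.1 hlt
    have hle : μ + μbar ≤ 2 := by linarith [hμ.2, hμbar.2]
    have hμ₁ := Ico_subset_Icc_self hμ
    simp only [hlt, if_false, mul_zero, add_zero] at hμ' hout hupd
    subst hμ' hout
    refine ⟨fun j hj => ?_,
      (hrec.setIntegral_Ioi_one_of_one_le_add (by omega) hμ₁ hμbar.1 hge hle).symm⟩
    rw [hupd j hj, hrec.integral_cell_sub_one_of_one_le_add (by omega) hμ₁ hge hle hj]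
    split_ifs <;> simp_all

/-- Exactness of the moving-mesh advection update with zero influx for
piecewise-constant data: if `φ̃` is constant on each mesh cell `C_{μ,j}` with
`∫_{C_{μ,j}} φ̃ = φ_j`, and `φ̃ = 0` outside `[0,1]`, and `ψ(a) = φ̃(a − μ̄Δa)`
is the exact translate, then the updated state satisfies
`φ'_j = ∫_{C_{μ',j}} ψ` for every `j`, and `φ_out = ∫_1^∞ ψ`. -/
theorem moving_mesh_update_exact
    (N : ℕ) (hN : 2 ≤ N) (μ μbar μ' φout : ℝ) (φ φ' : ℕ → ℝ)
    (φtil ψ : ℝ → ℝ)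
    (hμ : μ ∈ Set.Ico (0:ℝ) 1) (hμbar : μbar ∈ Set.Ico (0:ℝ) 1)
    (hμpos : 1 ≤ μ + μbar → 0 < μ)
    (hμ' : μ' = if μ + μbar < 1 then μ + μbar else μ + μbar - 1)
    (hout : φout = if μ + μbar < 1 then (μbar / (1 - μ)) * φ N
      else (μ + μbar - 1) * φ (N - 1) + φ N)
    (hupd : ∀ j ≤ N, φ' j =
      if μ + μbar < 1 then
        (if j = 0 then φ 0 + 0 else if j = N then φ N - φout else φ j)
      else
        (if j = 0 then (μ' / μ) * 0
         else if j = 1 then φ 0 + (1 - μ' / μ) * 0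
         else if j = N then (1 - μ') * φ (N - 1)
         else φ (j - 1)))
    (hconst : ∀ j ≤ N, ∃ c : ℝ,
      ∀ a ∈ Set.Ioo (cellLo N μ j) (cellHi N μ j), φtil a = c)
    (hint : ∀ j ≤ N, ∫ a in (cellLo N μ j)..(cellHi N μ j), φtil a = φ j)
    (hzero : ∀ a : ℝ, a ∉ Set.Icc (0:ℝ) 1 → φtil a = 0)
    (hψ : ∀ a : ℝ, ψ a = φtil (a - μbar / N)) :
    (∀ j ≤ N, φ' j = ∫ a in (cellLo N μ' j)..(cellHi N μ' j), ψ a) ∧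
      φout = ∫ a in Set.Ioi (1:ℝ), ψ a :=
  moving_mesh_update_exact_general N hN μ μbar μ' φout φ φ' φtil ψ hμ hμbar hμ' hout hupd hconst
    hint hzero hψ
end

section
/- The remapping to the reference mesh conserves total mass: for every μ ∈ [0,1] and φ ∈ ℝ^{N+1} (N ≥ 2), the remapped vector φ' satisfies Σ_{j=0}^{N} φ'_j = Σ_{j=0}^{N} φ_j. -/
/-! The remap is in conservative form: the new content of cell `j` is its old content plus the
flux through its left face minus the flux through its right face, and no flux crosses the outer
boundary, so the total change telescopes to zero. -/

open Finset

theorem sum_range_eq_of_conservative_form {M : Type*} [AddCommGroup M] {n : ℕ}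
    {φ φ' F : ℕ → M}
    (hF : F n = F 0) (h : ∀ j < n, φ' j = φ j + (F j - F (j + 1))) :
    ∑ j ∈ range n, φ' j = ∑ j ∈ range n, φ j := by
  rw [sum_congr rfl fun j hj => h j (mem_range.1 hj), sum_add_distrib, sum_range_sub', hF,
    sub_self, add_zero]

/-- The flux into cell `j` through its left face. -/
noncomputable def remapFlux (N : ℕ) (μ : ℝ) (φ : ℕ → ℝ) (j : ℕ) : ℝ :=
  if j = 1 then φ 0 else if 2 ≤ j ∧ j ≤ N then μ * φ (j - 1) else 0

section remapFlux

variable {N : ℕ} {μ : ℝ} {φ : ℕ → ℝ}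

@[simp]
theorem remapFlux_zero : remapFlux N μ φ 0 = 0 := by
  simp [remapFlux]

@[simp]
theorem remapFlux_one : remapFlux N μ φ 1 = φ 0 := by
  simp [remapFlux]

theorem remapFlux_of_two_le {j : ℕ} (h2 : 2 ≤ j) (hN : j ≤ N) :
    remapFlux N μ φ j = μ * φ (j - 1) := by
  simp [remapFlux, h2, hN, show j ≠ 1 by omega]

theorem remapFlux_of_lt {j : ℕ} (hj : N < j) (h1 : j ≠ 1) : remapFlux N μ φ j = 0 := by
  simp [remapFlux, h1, show ¬j ≤ N by omega]

end remapFlux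

theorem remap_mass_conservation_general
    (N : ℕ) (hN : 2 ≤ N) (μ : ℝ) (φ φ' : ℕ → ℝ)
    (h0 : φ' 0 = 0)
    (h1 : φ' 1 = φ 0 + (1 - μ) * φ 1)
    (hmid : ∀ j, 2 ≤ j → j ≤ N - 1 → φ' j = (1 - μ) * φ j + μ * φ (j - 1))
    (hend : φ' N = μ * φ (N - 1) + φ N) :
    ∑ j ∈ Finset.range (N + 1), φ' j = ∑ j ∈ Finset.range (N + 1), φ j := by
  have hout : remapFlux N μ φ (N + 1) = 0 := remapFlux_of_lt (by omega) (by omega)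
  refine sum_range_eq_of_conservative_form (F := remapFlux N μ φ)
    (by rw [hout, remapFlux_zero]) fun j hj => ?_
  rcases (by omega : j = 0 ∨ j = 1 ∨ (2 ≤ j ∧ j ≤ N - 1) ∨ N = j) with
    rfl | rfl | ⟨hj2, hjN⟩ | rfl
  · simp [h0]
  · rw [h1, remapFlux_one, remapFlux_of_two_le le_rfl hN]
    ring
  · rw [hmid j hj2 hjN, remapFlux_of_two_le hj2 (by omega),
      remapFlux_of_two_le (by omega) (by omega), Nat.add_sub_cancel]
    ring
  · rw [hend, hout, remapFlux_of_two_le hN le_rfl]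
    ring

/-- The remapping to the reference mesh (`φ'_0 = 0`, `φ'_1 = φ_0 + (1−μ)φ_1`,
`φ'_j = (1−μ)φ_j + μφ_{j−1}` for `2 ≤ j ≤ N−1`, `φ'_N = μφ_{N−1} + φ_N`)
conserves total mass. -/
theorem remap_mass_conservation
    (N : ℕ) (hN : 2 ≤ N) (μ : ℝ) (hμ : μ ∈ Set.Icc (0:ℝ) 1) (φ φ' : ℕ → ℝ)
    (h0 : φ' 0 = 0)
    (h1 : φ' 1 = φ 0 + (1 - μ) * φ 1)
    (hmid : ∀ j, 2 ≤ j → j ≤ N - 1 → φ' j = (1 - μ) * φ j + μ * φ (j - 1))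
    (hend : φ' N = μ * φ (N - 1) + φ N) :
    ∑ j ∈ Finset.range (N + 1), φ' j = ∑ j ∈ Finset.range (N + 1), φ j :=
  remap_mass_conservation_general N hN μ φ φ' h0 h1 hmid hend
end

section
/- The backward-Euler diffusion step preserves nonnegativity: for every integer N ≥ 2, every θ ≥ 0, and every x, ρ ∈ ℝ^{N+1} with Mx = ρ and ρ_j ≥ 0 for all j, one has x_j ≥ 0 for all j. -/
/-- The `(N+1)×(N+1)` backward-Euler diffusion matrix of the backward-time
central-space scheme for the heat equation with no-diffusive-flux boundary
conditions. -/
noncomputable def diffusionMatrix (N : ℕ) (θ : ℝ) :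
    Matrix (Fin (N + 1)) (Fin (N + 1)) ℝ :=
  fun i j =>
    if (i : ℕ) = (j : ℕ) then
      (if (i : ℕ) = 0 ∨ (i : ℕ) = N then 1 + θ else 1 + 2 * θ)
    else if (i : ℕ) + 1 = (j : ℕ) ∨ (j : ℕ) + 1 = (i : ℕ) then -θ
    else 0

/-!
Discrete minimum principle: at an index `i` where `x` is smallest,
`(M x)_i = (∑_j M_ij) x_i + ∑_{j ≠ i} M_ij (x_j - x_i)`, and the second sum is `≤ 0` because
the off-diagonal entries `-θ` are nonpositive. So `0 ≤ ρ_i ≤ (∑_j M_ij) x_i`, and the row sums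
of `M` are positive (they equal `1`, or `1 + θ` when `N = 0`), whence `0 ≤ min x`.
-/

open Matrix

theorem Matrix.nonneg_of_nonneg_mulVec {n R : Type*} [Fintype n] [Ring R] [LinearOrder R]
    [IsStrictOrderedRing R] {A : Matrix n n R} (hoff : ∀ i j, i ≠ j → A i j ≤ 0)
    (hrow : ∀ i, 0 < ∑ j, A i j) {x : n → R} (hx : 0 ≤ A *ᵥ x) : 0 ≤ x := by
  intro k
  obtain ⟨i, hi⟩ := (haveI : Nonempty n := ⟨k⟩; Finite.exists_min x)
  have hcorrection_nonpos : ∑ j, A i j * (x j - x i) ≤ 0 := by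
    refine Finset.sum_nonpos fun j _ => ?_
    rcases eq_or_ne i j with rfl | hij
    · simp
    · exact mul_nonpos_of_nonpos_of_nonneg (hoff i j hij) (sub_nonneg.2 (hi j))
  have hmin : 0 ≤ (∑ j, A i j) * x i :=
    calc 0 ≤ (A *ᵥ x) i := hx i
      _ = (∑ j, A i j) * x i + ∑ j, A i j * (x j - x i) := by
        simp only [mulVec, dotProduct, Finset.sum_mul, mul_sub, Finset.sum_sub_distrib]
        abel
      _ ≤ (∑ j, A i j) * x i := add_le_of_nonpos_right hcorrection_nonpos
  exact (nonneg_of_mul_nonneg_right hmin (hrow i)).trans (hi k)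

theorem diffusionMatrix_apply_nonpos_of_ne (N : ℕ) {θ : ℝ} (hθ : 0 ≤ θ) {i j : Fin (N + 1)}
    (hij : i ≠ j) : diffusionMatrix N θ i j ≤ 0 := by
  unfold diffusionMatrix
  rw [if_neg (Fin.val_ne_of_ne hij)]
  split_ifs <;> linarith

theorem sum_diffusionMatrix_row (N : ℕ) (θ : ℝ) (i : Fin (N + 1)) :
    ∑ j, diffusionMatrix N θ i j = if N = 0 then 1 + θ else 1 := by
  have hentry : ∀ j : Fin (N + 1), diffusionMatrix N θ i j =
      (if (j : ℕ) = i then (if (i : ℕ) = 0 ∨ (i : ℕ) = N then 1 + θ else 1 + 2 * θ) else 0)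
        + (if (j : ℕ) = i + 1 then -θ else 0)
        + (if 0 < (i : ℕ) then (if (j : ℕ) = i - 1 then -θ else 0) else 0) := by
    intro j
    unfold diffusionMatrix
    split_ifs <;> first | ring1 | omega
  simp only [hentry, Finset.sum_add_distrib]
  rw [Fin.sum_univ_eq_sum_range
      (fun m => if m = (i : ℕ) then (if (i : ℕ) = 0 ∨ (i : ℕ) = N then 1 + θ else 1 + 2 * θ)
        else 0),
    Fin.sum_univ_eq_sum_range (fun m => if m = (i : ℕ) + 1 then -θ else 0),
    Fin.sum_univ_eq_sum_range (fun m => if 0 < (i : ℕ) then (if m = (i : ℕ) - 1 then -θ else 0)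
      else 0)]
  simp only [Finset.sum_ite_irrel, Finset.sum_ite_eq', Finset.mem_range, Finset.sum_const_zero]
  have := i.isLt
  split_ifs <;> first | ring1 | omega

theorem sum_diffusionMatrix_row_pos (N : ℕ) {θ : ℝ} (hθ : 0 ≤ θ) (i : Fin (N + 1)) :
    0 < ∑ j, diffusionMatrix N θ i j := by
  rw [sum_diffusionMatrix_row]
  split_ifs <;> linarith

theorem diffusionMatrix_preserves_nonneg_general (N : ℕ) (θ : ℝ)
    (hθ : 0 ≤ θ) (x ρ : Fin (N + 1) → ℝ)
    (hxρ : (diffusionMatrix N θ).mulVec x = ρ)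
    (hρ : ∀ j, 0 ≤ ρ j) :
    ∀ j, 0 ≤ x j :=
  Matrix.nonneg_of_nonneg_mulVec (fun _ _ => diffusionMatrix_apply_nonpos_of_ne N hθ)
    (sum_diffusionMatrix_row_pos N hθ) (hxρ ▸ hρ)

/-- The backward-Euler diffusion step preserves nonnegativity: if `Mx = ρ`
with `ρ_j ≥ 0` for all `j`, then `x_j ≥ 0` for all `j`. -/
theorem diffusionMatrix_preserves_nonneg (N : ℕ) (hN : 2 ≤ N) (θ : ℝ)
    (hθ : 0 ≤ θ) (x ρ : Fin (N + 1) → ℝ)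
    (hxρ : (diffusionMatrix N θ).mulVec x = ρ)
    (hρ : ∀ j, 0 ≤ ρ j) :
    ∀ j, 0 ≤ x j :=
  diffusionMatrix_preserves_nonneg_general N θ hθ x ρ hxρ hρ
end

section
/- Fix an integer N ≥ 2 and an integer m ≥ 1. Let (μ̄ⁿ)_{n=1}^{m} ⊂ [0,1) with Σ_{n=1}^{m} μ̄ⁿ ≥ N+1, let μ⁰ = 0 with μⁿ given by the shift-update rule, let d⁰ ∈ ℝ^{N+1} be arbitrary, let dⁿ ∈ ℝ^{N+1} be the state after n applications of the moving-mesh advection update with influx 0 at every step, and let P = Σ_{n=1}^{m} φ_outⁿ be the accumulated outflux over the m steps. Then d^m = 0 and P = Σ_{j=0}^{N} d⁰_j. Consequently, the linear map ℝ^{N+1} → ℝ^{N+2} sending d⁰ to (d^m, P) has image spanned by the single vector (0,…,0,1), so its image is one-dimensional (for d⁰ ≠ 0 in the kernel complement) and in particular has dimension at most 1. -/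
/-- Shift-update rule: `μ' = μ + μ̄` if `μ + μ̄ < 1`, else `μ' = μ + μ̄ − 1`. -/
noncomputable def shiftUpd (μ μbar : ℝ) : ℝ :=
  if μ + μbar < 1 then μ + μbar else μ + μbar - 1

/-- One step of the moving-mesh advection update (state part) for an
`(N+1)`-cell domain with shift `μ`, relative shift `μ̄`, and influx `φin`. -/
noncomputable def advUpd (N : ℕ) (μ μbar : ℝ) (φ : ℕ → ℝ) (φin : ℝ) : ℕ → ℝ :=
  fun j =>
    if μ + μbar < 1 then
      if j = 0 then φ 0 + φin
      else if j = N then φ N - (μbar / (1 - μ)) * φ N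
      else φ j
    else
      if j = 0 then ((μ + μbar - 1) / μ) * φin
      else if j = 1 then φ 0 + (1 - (μ + μbar - 1) / μ) * φin
      else if j = N then (1 - (μ + μbar - 1)) * φ (N - 1)
      else φ (j - 1)

/-- One step of the moving-mesh advection update (outflux part). -/
noncomputable def advOut (N : ℕ) (μ μbar : ℝ) (φ : ℕ → ℝ) : ℝ :=
  if μ + μbar < 1 then (μbar / (1 - μ)) * φ N
  else (μ + μbar - 1) * φ (N - 1) + φ N

/-- The shift sequence `μⁿ` with `μ⁰ = 0` driven by relative shifts `μ̄ⁿ`. -/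
noncomputable def muSeq (μbar : ℕ → ℝ) : ℕ → ℝ
  | 0 => 0
  | n + 1 => shiftUpd (muSeq μbar n) (μbar (n + 1))

/-- The state `dⁿ` after `n` moving-mesh advection updates with influx `0` at
every step, starting from `d⁰ = d0`. -/
noncomputable def dSeq (N : ℕ) (μbar : ℕ → ℝ) (d0 : ℕ → ℝ) : ℕ → ℕ → ℝ
  | 0 => d0
  | n + 1 => advUpd N (muSeq μbar n) (μbar (n + 1)) (dSeq N μbar d0 n) 0

/-- The accumulated outflux `P = Σ_{n=1}^{m} φ_outⁿ` over `m` steps. -/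
noncomputable def Pacc (N : ℕ) (μbar : ℕ → ℝ) (d0 : ℕ → ℝ) (m : ℕ) : ℝ :=
  ∑ n ∈ Finset.range m, advOut N (muSeq μbar n) (μbar (n + 1)) (dSeq N μbar d0 n)

/-!
With zero influx a step conserves mass: the cell masses after the step plus its outflux equal
the cell masses before it. A step with `μ + μ̄ ≥ 1` (a wrap) moves the mesh by one cell and
shifts a zero into cell `0`, and `∑_{i ≤ n} μ̄ⁱ - μⁿ` is the number of wraps among the first `n`
steps. As `μ^m < 1` and `∑ μ̄ⁿ ≥ N + 1`, more than `N` wraps occur, so `d^m = 0` and all the mass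
has left as outflux: `d⁰ ↦ (d^m, P)` takes values on the line through `(0, …, 0, 1)`.
-/

theorem shiftUpd_mem_Ico {μ μbar : ℝ} (hμ : μ ∈ Set.Ico (0 : ℝ) 1)
    (hμbar : μbar ∈ Set.Ico (0 : ℝ) 1) : shiftUpd μ μbar ∈ Set.Ico (0 : ℝ) 1 := by
  obtain ⟨hμ0, hμ1⟩ := hμ
  obtain ⟨hb0, hb1⟩ := hμbar
  unfold shiftUpd
  split_ifs with h
  · exact ⟨by linarith, h⟩
  · constructor <;> linarith

theorem muSeq_mem_Ico {μbar : ℕ → ℝ} {m : ℕ}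
    (hμbar : ∀ n, 1 ≤ n → n ≤ m → μbar n ∈ Set.Ico (0 : ℝ) 1) :
    ∀ n ≤ m, muSeq μbar n ∈ Set.Ico (0 : ℝ) 1
  | 0, _ => by simp [muSeq]
  | n + 1, hn =>
    shiftUpd_mem_Ico (muSeq_mem_Ico hμbar n (by omega)) (hμbar (n + 1) (by omega) hn)

section OneStep

variable {N : ℕ} {μ μbar : ℝ} {φ : ℕ → ℝ}

theorem advUpd_eq_zero_of_lt_one (h : μ + μbar < 1) {j : ℕ} (hj : φ j = 0) :
    advUpd N μ μbar φ 0 j = 0 := by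
  unfold advUpd
  split_ifs <;> simp_all

theorem advUpd_zero_eq_zero_of_not_lt_one (h : ¬ μ + μbar < 1) : advUpd N μ μbar φ 0 0 = 0 := by
  simp [advUpd, h]

theorem advUpd_succ_eq_zero_of_not_lt_one (h : ¬ μ + μbar < 1) {j : ℕ} (hj : φ j = 0) :
    advUpd N μ μbar φ 0 (j + 1) = 0 := by
  rcases eq_or_ne N (j + 1) with rfl | hN
  · rcases j with _ | j <;> simp [advUpd, h, hj]
  · rcases j with _ | j <;> simp [advUpd, h, hN.symm, hj]

end OneStep

open Finset in
theorem sum_advUpd_add_advOut {N : ℕ} (hN : 2 ≤ N) (μ μbar : ℝ) (φ : ℕ → ℝ) (φin : ℝ) :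
    ∑ j ∈ range (N + 1), advUpd N μ μbar φ φin j + advOut N μ μbar φ =
      ∑ j ∈ range (N + 1), φ j + φin := by
  obtain ⟨K, rfl⟩ : ∃ K, N = K + 2 := ⟨N - 2, by omega⟩
  by_cases h : μ + μbar < 1
  · have hinner : ∀ i ∈ range (K + 1), advUpd (K + 2) μ μbar φ φin (i + 1) = φ (i + 1) := by
      intro i hi
      have : i ≠ K + 1 := by rw [mem_range] at hi; omega
      simp [advUpd, h, this]
    rw [sum_range_succ, sum_range_succ', sum_congr rfl hinner, sum_range_succ (f := φ),
      sum_range_succ' (f := φ)]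
    simp [advUpd, advOut, h]
    ring
  · have hinner : ∀ i ∈ range K, advUpd (K + 2) μ μbar φ φin (i + 2) = φ (i + 1) := by
      intro i hi
      have : i ≠ K := by rw [mem_range] at hi; omega
      simp [advUpd, h, this]
    rw [sum_range_succ, sum_range_succ', sum_range_succ', sum_congr rfl hinner,
      sum_range_succ (f := φ), sum_range_succ (f := φ), sum_range_succ' (f := φ)]
    simp [advUpd, advOut, h]
    ring

section Winter

open Finset

variable {N : ℕ} {μbar : ℕ → ℝ} {d0 : ℕ → ℝ}

theorem dSeq_eq_zero_of_lt {n j : ℕ}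
    (hj : (j : ℝ) < ∑ i ∈ range n, μbar (i + 1) - muSeq μbar n) : dSeq N μbar d0 n j = 0 := by
  induction n generalizing j with
  | zero => exact absurd hj (by simp [muSeq])
  | succ n ih =>
    rw [sum_range_succ, muSeq, shiftUpd] at hj
    rw [dSeq]
    split_ifs at hj with h
    · exact advUpd_eq_zero_of_lt_one h (ih (by linarith))
    · rcases j with _ | j
      · exact advUpd_zero_eq_zero_of_not_lt_one h
      · exact advUpd_succ_eq_zero_of_not_lt_one h (ih (by push_cast at hj; linarith))

theorem sum_dSeq_add_Pacc (hN : 2 ≤ N) (n : ℕ) :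
    ∑ j ∈ range (N + 1), dSeq N μbar d0 n j + Pacc N μbar d0 n = ∑ j ∈ range (N + 1), d0 j := by
  induction n with
  | zero => simp [dSeq, Pacc]
  | succ n ih =>
    have hstep := sum_advUpd_add_advOut hN (muSeq μbar n) (μbar (n + 1)) (dSeq N μbar d0 n) 0
    have hP : Pacc N μbar d0 (n + 1) =
        Pacc N μbar d0 n + advOut N (muSeq μbar n) (μbar (n + 1)) (dSeq N μbar d0 n) :=
      sum_range_succ _ _
    rw [hP, dSeq]
    linarith

variable {m : ℕ} (hμbar : ∀ n, 1 ≤ n → n ≤ m → μbar n ∈ Set.Ico (0 : ℝ) 1)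
  (hsum : (N : ℝ) + 1 ≤ ∑ n ∈ range m, μbar (n + 1))
include hμbar hsum

theorem dSeq_eq_zero {j : ℕ} (hj : j ≤ N) : dSeq N μbar d0 m j = 0 := by
  have hμ : muSeq μbar m < 1 := (muSeq_mem_Ico hμbar m le_rfl).2
  have : (j : ℝ) ≤ N := by exact_mod_cast hj
  exact dSeq_eq_zero_of_lt (by linarith)

theorem Pacc_eq_sum (hN : 2 ≤ N) : Pacc N μbar d0 m = ∑ j ∈ range (N + 1), d0 j := by
  rw [← sum_dSeq_add_Pacc hN m, sum_eq_zero fun j hj => dSeq_eq_zero hμbar hsum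
    (Nat.lt_succ_iff.mp (mem_range.mp hj)), zero_add]

end Winter

theorem Fin.snoc_zero_eq_smul_single {R : Type*} [MulZeroOneClass R] {n : ℕ} (a : R) :
    (Fin.snoc (0 : Fin n → R) a : Fin (n + 1) → R) = a • Pi.single (Fin.last n) 1 := by
  ext i
  refine Fin.lastCases ?_ (fun i => ?_) i <;> simp

theorem finrank_span_le_one_of_subset_span_singleton {K V : Type*} [DivisionRing K]
    [AddCommGroup V] [Module K V] {s : Set V} {v : V} (h : s ⊆ K ∙ v) :
    Module.finrank K (Submodule.span K s) ≤ 1 :=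
  (Submodule.finrank_mono (Submodule.span_le.mpr h)).trans
    (by simpa using finrank_span_le_card ({v} : Set V))

theorem winter_operator_rank_one_general
    (N m : ℕ) (hN : 2 ≤ N) (μbar : ℕ → ℝ)
    (hμbar : ∀ n, 1 ≤ n → n ≤ m → μbar n ∈ Set.Ico (0:ℝ) 1)
    (hsum : (N : ℝ) + 1 ≤ ∑ n ∈ Finset.range m, μbar (n + 1)) :
    (∀ d0 : ℕ → ℝ,
        (∀ j ≤ N, dSeq N μbar d0 m j = 0) ∧
        Pacc N μbar d0 m = ∑ j ∈ Finset.range (N + 1), d0 j) ∧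
    ∀ F : (Fin (N + 1) → ℝ) → (Fin (N + 2) → ℝ),
      (∀ v : Fin (N + 1) → ℝ,
        F v = Fin.snoc
          (fun j : Fin (N + 1) =>
            dSeq N μbar (fun i => if h : i < N + 1 then v ⟨i, h⟩ else 0) m j)
          (Pacc N μbar (fun i => if h : i < N + 1 then v ⟨i, h⟩ else 0) m)) →
      Set.range F ⊆
        ((Submodule.span ℝ {Pi.single (Fin.last (N + 1)) (1:ℝ)} :
          Submodule ℝ (Fin (N + 2) → ℝ)) : Set (Fin (N + 2) → ℝ)) ∧
      Module.finrank ℝ ↥(Submodule.span ℝ (Set.range F)) ≤ 1 := by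
  refine ⟨fun d0 => ⟨fun j hj => dSeq_eq_zero hμbar hsum hj, Pacc_eq_sum hμbar hsum hN⟩,
    fun F hF => ?_⟩
  have hrange : Set.range F ⊆ ℝ ∙ (Pi.single (Fin.last (N + 1)) 1 : Fin (N + 2) → ℝ) := by
    rintro _ ⟨v, rfl⟩
    rw [hF v, funext fun j : Fin (N + 1) => dSeq_eq_zero hμbar hsum (Nat.lt_succ_iff.mp j.isLt),
      ← Pi.zero_def, Fin.snoc_zero_eq_smul_single]
    exact Submodule.smul_mem _ _ (Submodule.mem_span_singleton_self _)
  exact ⟨hrange, finrank_span_le_one_of_subset_span_singleton hrange⟩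

/-- Core of the rank-1 structure proposition: if the relative shifts
`μ̄ⁿ ∈ [0,1)` over `m` steps accumulate to at least `N+1`, then with zero influx
the final state vanishes, `d^m = 0`, and the accumulated outflux equals the
initial total mass, `P = Σ_j d⁰_j`.  Consequently, the map `d⁰ ↦ (d^m, P)` has
range contained in the span of the single vector `(0,…,0,1)`, so the span of
its range has dimension at most `1`. -/
theorem winter_operator_rank_one
    (N m : ℕ) (hN : 2 ≤ N) (hm : 1 ≤ m) (μbar : ℕ → ℝ)
    (hμbar : ∀ n, 1 ≤ n → n ≤ m → μbar n ∈ Set.Ico (0:ℝ) 1)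
    (hsum : (N : ℝ) + 1 ≤ ∑ n ∈ Finset.range m, μbar (n + 1)) :
    (∀ d0 : ℕ → ℝ,
        (∀ j ≤ N, dSeq N μbar d0 m j = 0) ∧
        Pacc N μbar d0 m = ∑ j ∈ Finset.range (N + 1), d0 j) ∧
    ∀ F : (Fin (N + 1) → ℝ) → (Fin (N + 2) → ℝ),
      (∀ v : Fin (N + 1) → ℝ,
        F v = Fin.snoc
          (fun j : Fin (N + 1) =>
            dSeq N μbar (fun i => if h : i < N + 1 then v ⟨i, h⟩ else 0) m j)
          (Pacc N μbar (fun i => if h : i < N + 1 then v ⟨i, h⟩ else 0) m)) →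
      Set.range F ⊆
        ((Submodule.span ℝ {Pi.single (Fin.last (N + 1)) (1:ℝ)} :
          Submodule ℝ (Fin (N + 2) → ℝ)) : Set (Fin (N + 2) → ℝ)) ∧
      Module.finrank ℝ ↥(Submodule.span ℝ (Set.range F)) ≤ 1 :=
  winter_operator_rank_one_general N m hN μbar hμbar hsum
end
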